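/- arXiv:1407.2767 — 3 statements merged into one kernel-verified Lean document; each statement's English description precedes it below -/
import Mathlib

section
/- Let p : ℝⁿ → [1,∞) be log-Hölder continuous with p⁺ < ∞ and let m > 0. Then there exists a constant c (depending on the log-Hölder constant of p, m, and p⁺) such that for every cube Q ⊂ ℝⁿ with side length ℓ(Q) ≤ 1, every κ ∈ [0,1], every t ≥ 0 with |Q|^m ≤ t ≤ |Q|^{-m}, and all x, y ∈ Q, one has (κ + t)^{p(x) - p(y)} ≤ c. -/
/-- Lemma 2.1 in [BrDiSc]. For a log-Hölder continuous variable
exponent `p : ℝⁿ → [1,∞)` with `p⁺ < ∞` and any `m > 0`, there is a constant `c`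
such that for every cube `Q` of side length `ℓ ≤ 1` (modeled as a closed ball of
radius `ℓ/2` in the sup metric on `Fin n → ℝ`, whose volume is `ℓ^n`), every
`κ ∈ [0,1]` and every `t` with `|Q|^m ≤ t ≤ |Q|^{-m}`, one has
`(κ + t)^(p x - p y) ≤ c` for all `x, y ∈ Q`. -/
theorem statement0 (n : ℕ) (p : (Fin n → ℝ) → ℝ) (clog pplus : ℝ)
    (hp1 : ∀ x, 1 ≤ p x) (hpp : ∀ x, p x ≤ pplus)
    (hlog : ∀ x y, x ≠ y →
      |p x - p y| ≤ clog / Real.log (Real.exp 1 + 1 / dist x y))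
    (m : ℝ) (hm : 0 < m) :
    ∃ c > 0, ∀ (z : Fin n → ℝ) (ℓ : ℝ), 0 < ℓ → ℓ ≤ 1 →
      ∀ κ ∈ Set.Icc (0:ℝ) 1, ∀ t : ℝ,
        ((ℓ ^ n : ℝ)) ^ m ≤ t → t ≤ ((ℓ ^ n : ℝ)) ^ (-m) →
        ∀ x ∈ Metric.closedBall z (ℓ / 2), ∀ y ∈ Metric.closedBall z (ℓ / 2),
          (κ + t) ^ (p x - p y) ≤ c := by
  set K : ℝ := (n : ℝ) * m * max clog 0 with hK
  have hK0 : 0 ≤ K := by positivity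
  have hpplus1 : (1:ℝ) ≤ pplus := le_trans (hp1 0) (hpp 0)
  refine ⟨(2:ℝ) ^ pplus * Real.exp K, by positivity, ?_⟩
  intro z ℓ hℓ0 hℓ1 κ hκ t ht1 ht2 x hx y hy
  have hc1 : (1:ℝ) ≤ (2:ℝ) ^ pplus * Real.exp K := by
    have h1 : (1:ℝ) ≤ (2:ℝ) ^ pplus := Real.one_le_rpow one_le_two (by linarith)
    have h2 : (1:ℝ) ≤ Real.exp K := Real.one_le_exp hK0
    nlinarith
  by_cases hxy : x = y
  · simp [hxy, Real.rpow_zero]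
    exact hc1
  have hℓn0 : (0:ℝ) < ℓ ^ n := by positivity
  have hA0 : (0:ℝ) < ((ℓ ^ n : ℝ)) ^ m := Real.rpow_pos_of_pos hℓn0 m
  have hb0 : 0 < κ + t := by linarith [hκ.1]
  have hdℓ : dist x y ≤ ℓ := by
    have hx' := Metric.mem_closedBall.1 hx
    have hy' := Metric.mem_closedBall.1 hy
    calc dist x y ≤ dist x z + dist z y := dist_triangle _ _ _
      _ ≤ ℓ/2 + ℓ/2 := add_le_add hx' (by rw [dist_comm]; exact hy')
      _ = ℓ := by ring
  have hd0 : 0 < dist x y := dist_pos.2 hxy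
  set L : ℝ := -Real.log ℓ with hLdef
  have hL0 : 0 ≤ L := by
    have := Real.log_nonpos hℓ0.le hℓ1
    simp only [hLdef]; linarith
  set Lg : ℝ := Real.log (Real.exp 1 + 1 / dist x y) with hLg
  have hLg1 : (1:ℝ) ≤ Lg := by
    rw [hLg]
    calc (1:ℝ) = Real.log (Real.exp 1) := (Real.log_exp 1).symm
      _ ≤ _ := Real.log_le_log (Real.exp_pos 1)
          (le_add_of_nonneg_right (one_div_pos.2 hd0).le)
  have hLLg : L ≤ Lg := by
    have h1 : (1:ℝ)/ℓ ≤ Real.exp 1 + 1/dist x y := by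
      have h2 : 1/ℓ ≤ 1/dist x y := one_div_le_one_div_of_le hd0 hdℓ
      have h3 := (Real.exp_pos 1).le
      linarith
    calc L = Real.log (1/ℓ) := by
          rw [Real.log_div one_ne_zero (ne_of_gt hℓ0), Real.log_one]; ring
      _ ≤ Lg := Real.log_le_log (by positivity) h1
  have hs := hlog x y hxy
  rw [← hLg] at hs
  have hLgpos : (0:ℝ) < Lg := by linarith
  have hclog : 0 ≤ clog := by
    by_contra h
    push_neg at h
    have hneg : clog / Lg < 0 := div_neg_of_neg_of_pos h hLgpos
    have := abs_nonneg (p x - p y)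
    linarith
  have hsL : |p x - p y| * L ≤ max clog 0 := by
    have h1 : |p x - p y| * L ≤ (clog / Lg) * L :=
      mul_le_mul_of_nonneg_right hs hL0
    have h2 : (clog / Lg) * L ≤ (clog / Lg) * Lg :=
      mul_le_mul_of_nonneg_left hLLg (div_nonneg hclog hLgpos.le)
    have h3 : (clog / Lg) * Lg = clog := div_mul_cancel₀ clog (ne_of_gt hLgpos)
    calc |p x - p y| * L ≤ clog := le_trans h1 (le_of_le_of_eq h2 h3)
      _ ≤ max clog 0 := le_max_left _ _
  have hsp : |p x - p y| ≤ pplus := by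
    have h1 := hp1 x; have h2 := hp1 y; have h3 := hpp x; have h4 := hpp y
    rw [abs_sub_le_iff]; constructor <;> linarith
  have hlogℓn : Real.log ((ℓ ^ n : ℝ)) = (n : ℝ) * Real.log ℓ := by rw [Real.log_pow]
  have hA : Real.log (((ℓ ^ n : ℝ)) ^ m) = m * ((n:ℝ) * Real.log ℓ) := by
    rw [Real.log_rpow hℓn0, hlogℓn]
  have hlogℓL : m * ((n:ℝ) * Real.log ℓ) = -(m * (n:ℝ) * L) := by
    simp only [hLdef]; ring
  have hlog2 : 0 ≤ Real.log 2 := Real.log_nonneg one_le_two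
  have hlb : -(Real.log (κ + t)) ≤ Real.log 2 + m * (n:ℝ) * L := by
    have h1 : ((ℓ ^ n : ℝ)) ^ m ≤ κ + t := by linarith [hκ.1]
    have h2 := Real.log_le_log hA0 h1
    rw [hA, hlogℓL] at h2
    linarith
  have hub : Real.log (κ + t) ≤ Real.log 2 + m * (n:ℝ) * L := by
    have hge1 : (1:ℝ) ≤ ((ℓ ^ n : ℝ)) ^ (-m) := by
      apply Real.one_le_rpow_of_pos_of_le_one_of_nonpos hℓn0
        (pow_le_one₀ hℓ0.le hℓ1) (by linarith)
    have h1 : κ + t ≤ 2 * ((ℓ ^ n : ℝ)) ^ (-m) := by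
      have := hκ.2
      have hA0' : (0:ℝ) < ((ℓ ^ n : ℝ)) ^ (-m) := Real.rpow_pos_of_pos hℓn0 _
      linarith
    have h2 := Real.log_le_log hb0 h1
    rw [Real.log_mul two_ne_zero (ne_of_gt (Real.rpow_pos_of_pos hℓn0 _)),
      Real.log_rpow hℓn0, hlogℓn] at h2
    have : (-m) * ((n:ℝ) * Real.log ℓ) = m * (n:ℝ) * L := by
      simp only [hLdef]; ring
    linarith
  have hlogb : |Real.log (κ + t)| ≤ Real.log 2 + m * (n:ℝ) * L :=
    abs_le.2 ⟨by linarith, hub⟩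
  have key : Real.log (κ + t) * (p x - p y) ≤ pplus * Real.log 2 + K := by
    have c1 : Real.log (κ + t) * (p x - p y) ≤ |Real.log (κ + t)| * |p x - p y| := by
      calc Real.log (κ + t) * (p x - p y) ≤ |Real.log (κ + t) * (p x - p y)| :=
            le_abs_self _
        _ = |Real.log (κ + t)| * |p x - p y| := abs_mul _ _
    have c2 : |Real.log (κ + t)| * |p x - p y|
        ≤ (Real.log 2 + m * (n:ℝ) * L) * |p x - p y| :=
      mul_le_mul_of_nonneg_right hlogb (abs_nonneg _)
    have c3 : (Real.log 2 + m * (n:ℝ) * L) * |p x - p y|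
        = Real.log 2 * |p x - p y| + m * (n:ℝ) * (|p x - p y| * L) := by ring
    have c4 : Real.log 2 * |p x - p y| ≤ Real.log 2 * pplus :=
      mul_le_mul_of_nonneg_left hsp hlog2
    have c5 : m * (n:ℝ) * (|p x - p y| * L) ≤ m * (n:ℝ) * max clog 0 :=
      mul_le_mul_of_nonneg_left hsL (by positivity)
    have c6 : pplus * Real.log 2 + K = Real.log 2 * pplus + m * (n:ℝ) * max clog 0 := by
      rw [hK]; ring
    linarith
  rw [Real.rpow_def_of_pos hb0]
  calc Real.exp (Real.log (κ + t) * (p x - p y))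
      ≤ Real.exp (pplus * Real.log 2 + K) := Real.exp_le_exp.2 key
    _ = (2:ℝ) ^ pplus * Real.exp K := by
        rw [Real.exp_add, Real.rpow_def_of_pos two_pos, mul_comm (Real.log 2) pplus]
end

section
/- Let ρ be a C¹ N-function which is C² on (0,∞) and elliptic, i.e. ρ'(t) ∼ t·ρ''(t) uniformly in t > 0. Define the shifted N-function ρ_a(t) := ∫₀ᵗ (ρ'(a+τ)/(a+τ))·τ dτ for a ≥ 0. Then uniformly in a, t ≥ 0: ρ_a(t) is comparable to ρ''(a)·t² when t ≲ a, and comparable to ρ(t) when t ≳ a. -/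
/-!
Write `f = ρ'`. Convexity makes `f` positive and nondecreasing on `(0, ∞)`, and the upper
ellipticity bound `t f'(t) ≤ c₂ f(t)` makes `f(t) t^(-c₂)` nonincreasing, so
`f y ≤ 2^c₂ f x` whenever `x ≤ y ≤ 2x`. Hence the integrand `f(a+τ) τ / (a+τ)` of `ρ_a(t)` is at
most its value at `τ = t`, and on `[t/2, t]` at least `2^(-c₂-1)` times that value, so
`ρ_a(t) ∼ t² f(a+t) / (a+t)`. For `t ≤ a` this is `∼ t² f(a) / a ∼ t² ρ''(a)` by ellipticity; for
`a ≤ t` it is `∼ t f(t) ∼ ρ(t)`, the last step by convexity: `(t/2) f(t/2) ≤ ρ(t) ≤ t f(t)`.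
-/

open Set Filter

/-- An N-function: strictly increasing and convex on `[0,∞)`, vanishing at `0`,
with `ρ(t)/t → 0` as `t → 0⁺` and `t/ρ(t) → 0` as `t → ∞`. -/
def IsNFunction (ρ : ℝ → ℝ) : Prop :=
  ρ 0 = 0 ∧ StrictMonoOn ρ (Ici 0) ∧ ConvexOn ℝ (Ici 0) ρ ∧
    Tendsto (fun t => ρ t / t) (nhdsWithin 0 (Ioi 0)) (nhds 0) ∧
    Tendsto (fun t => t / ρ t) atTop (nhds 0)

/-- The conjugate (Young/Legendre) function `ρ*(t) = sup_{s ≥ 0} (s t − ρ s)`. -/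
noncomputable def conjN (ρ : ℝ → ℝ) (t : ℝ) : ℝ :=
  sSup {y | ∃ s ≥ 0, y = s * t - ρ s}

/-- The shifted N-function `ρ_a(t) = ∫₀ᵗ ρ'(a+τ)/(a+τ) · τ dτ`. -/
noncomputable def shiftN (ρ : ℝ → ℝ) (a : ℝ) (t : ℝ) : ℝ :=
  ∫ τ in (0:ℝ)..t, deriv ρ (a + τ) / (a + τ) * τ

/-- An elliptic N-function with characteristics `c₁, c₂`: `C¹` on `[0,∞)`,
`C²` on `(0,∞)`, and `ρ'(t) ∼ t ρ''(t)` uniformly in `t > 0`. -/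
def IsElliptic (ρ : ℝ → ℝ) (c₁ c₂ : ℝ) : Prop :=
  ContDiffOn ℝ 1 ρ (Ici 0) ∧ ContDiffOn ℝ 2 ρ (Ioi 0) ∧
    ∀ t > 0, c₁ * deriv ρ t ≤ t * deriv (deriv ρ) t ∧
      t * deriv (deriv ρ) t ≤ c₂ * deriv ρ t

open MeasureTheory

lemma le_rpow_mul_of_mul_deriv_le {f : ℝ → ℝ} {c x y : ℝ} (hf : DifferentiableOn ℝ f (Ioi 0))
    (h : ∀ z > 0, z * deriv f z ≤ c * f z) (hx : 0 < x) (hxy : x ≤ y) :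
    f y ≤ (y / x) ^ c * f x := by
  have hy : 0 < y := hx.trans_le hxy
  have hder : ∀ z ∈ Ioi (0 : ℝ), HasDerivAt (fun z => f z * z ^ (-c))
      (z ^ (-c - 1) * (z * deriv f z - c * f z)) z := by
    intro z hz
    refine (((hf z hz).differentiableAt (isOpen_Ioi.mem_nhds hz)).hasDerivAt.mul
      (Real.hasDerivAt_rpow_const (p := -c) (Or.inl (ne_of_gt hz)))).congr_deriv ?_
    have hz0 : z ≠ 0 := ne_of_gt hz
    rw [Real.rpow_sub hz, Real.rpow_one]
    field_simp
    ring
  have hanti : AntitoneOn (fun z => f z * z ^ (-c)) (Ioi 0) := by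
    refine antitoneOn_of_hasDerivWithinAt_nonpos (convex_Ioi 0)
      (f' := fun z => z ^ (-c - 1) * (z * deriv f z - c * f z))
      (fun z hz => (hder z hz).continuousAt.continuousWithinAt) (fun z hz => ?_) (fun z hz => ?_)
    · rw [interior_Ioi] at hz
      exact (hder z hz).hasDerivWithinAt
    · rw [interior_Ioi] at hz
      exact mul_nonpos_of_nonneg_of_nonpos (Real.rpow_nonneg hz.le _)
        (sub_nonpos.2 (h z hz))
  have key := hanti hx hy hxy
  simp only [Real.rpow_neg hx.le, Real.rpow_neg hy.le] at key
  rw [Real.div_rpow hy.le hx.le]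
  have hxc := Real.rpow_pos_of_pos hx c
  have hyc := Real.rpow_pos_of_pos hy c
  rw [div_mul_eq_mul_div, le_div_iff₀ hxc]
  rw [← div_eq_mul_inv, ← div_eq_mul_inv, div_le_div_iff₀ hyc hxc] at key
  linarith

variable {ρ : ℝ → ℝ} {c₁ c₂ a s t x y : ℝ}

namespace IsNFunction

lemma nonneg (hN : IsNFunction ρ) (ht : 0 ≤ t) : 0 ≤ ρ t := by
  rcases ht.eq_or_lt with rfl | ht
  · exact hN.1.ge
  · simpa [hN.1] using (hN.2.1 (mem_Ici.2 le_rfl) ht.le ht).le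

lemma convexOn_Ioi (hN : IsNFunction ρ) : ConvexOn ℝ (Ioi 0) ρ :=
  hN.2.2.1.subset Ioi_subset_Ici_self (convex_Ioi 0)

lemma deriv_pos (hN : IsNFunction ρ) (hd : DifferentiableAt ℝ ρ x) (hx : 0 < x) :
    0 < deriv ρ x := by
  have hslope := hN.2.2.1.slope_le_deriv (mem_Ici.2 le_rfl) hx.le hx hd
  rw [slope_def_field, hN.1, sub_zero, sub_zero] at hslope
  exact (div_pos (by simpa [hN.1] using hN.2.1 (mem_Ici.2 le_rfl) hx.le hx) hx).trans_le hslope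

lemma le_mul_deriv (hN : IsNFunction ρ) (hd : DifferentiableAt ℝ ρ t) (ht : 0 < t) :
    ρ t ≤ t * deriv ρ t := by
  have hslope := hN.2.2.1.slope_le_deriv (mem_Ici.2 le_rfl) ht.le ht hd
  rw [slope_def_field, hN.1, sub_zero, sub_zero, div_le_iff₀ ht] at hslope
  linarith

lemma sub_mul_deriv_le (hN : IsNFunction ρ) (hd : DifferentiableAt ℝ ρ s) (hs : 0 < s)
    (hst : s < t) : (t - s) * deriv ρ s ≤ ρ t := by
  have hslope := hN.2.2.1.deriv_le_slope hs.le (hs.le.trans hst.le) hst hd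
  rw [slope_def_field, le_div_iff₀ (sub_pos.2 hst)] at hslope
  linarith [hN.nonneg hs.le]

end IsNFunction

namespace IsElliptic

lemma differentiableAt (hE : IsElliptic ρ c₁ c₂) (hx : 0 < x) : DifferentiableAt ℝ ρ x :=
  (hE.1.differentiableOn one_ne_zero).differentiableAt (Ici_mem_nhds hx)

lemma differentiableOn_deriv (hE : IsElliptic ρ c₁ c₂) : DifferentiableOn ℝ (deriv ρ) (Ioi 0) :=
  (hE.2.1.deriv_of_isOpen isOpen_Ioi (by norm_num)).differentiableOn one_ne_zero

lemma deriv_pos (hN : IsNFunction ρ) (hE : IsElliptic ρ c₁ c₂) (hx : 0 < x) :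
    0 < deriv ρ x :=
  hN.deriv_pos (hE.differentiableAt hx) hx

lemma deriv_deriv_pos (hN : IsNFunction ρ) (hE : IsElliptic ρ c₁ c₂) (hc₁ : 0 < c₁) (hx : 0 < x) :
    0 < deriv (deriv ρ) x :=
  pos_of_mul_pos_right ((mul_pos hc₁ (hE.deriv_pos hN hx)).trans_le (hE.2.2 x hx).1) hx.le

lemma monotoneOn_deriv (hN : IsNFunction ρ) (hE : IsElliptic ρ c₁ c₂) :
    MonotoneOn (deriv ρ) (Ioi 0) :=
  hN.convexOn_Ioi.monotoneOn_deriv fun _ hx => hE.differentiableAt hx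

lemma deriv_le_two_rpow_mul (hN : IsNFunction ρ) (hE : IsElliptic ρ c₁ c₂) (hc₂ : 0 ≤ c₂)
    (hx : 0 < x) (hxy : x ≤ y) (hy : y ≤ 2 * x) : deriv ρ y ≤ 2 ^ c₂ * deriv ρ x := by
  refine (le_rpow_mul_of_mul_deriv_le hE.differentiableOn_deriv
    (fun z hz => (hE.2.2 z hz).2) hx hxy).trans ?_
  refine mul_le_mul_of_nonneg_right ?_ (hE.deriv_pos hN hx).le
  exact Real.rpow_le_rpow (div_pos (hx.trans_le hxy) hx).le ((div_le_iff₀ hx).2 (by linarith)) hc₂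

end IsElliptic

/-- The integrand of `shiftN ρ a`, so that `shiftN ρ a t = ∫ τ in 0..t, shiftIntegrand ρ a τ`
holds by `rfl`. -/
noncomputable def shiftIntegrand (ρ : ℝ → ℝ) (a τ : ℝ) : ℝ := deriv ρ (a + τ) / (a + τ) * τ

lemma shiftIntegrand_nonneg (hN : IsNFunction ρ) (hE : IsElliptic ρ c₁ c₂) (ha : 0 ≤ a)
    (hs : 0 ≤ s) : 0 ≤ shiftIntegrand ρ a s := by
  rcases hs.eq_or_lt with rfl | hs
  · simp [shiftIntegrand]
  have := hE.deriv_pos hN (by linarith : 0 < a + s)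
  unfold shiftIntegrand
  positivity

lemma shiftIntegrand_le (hN : IsNFunction ρ) (hE : IsElliptic ρ c₁ c₂) (ha : 0 ≤ a)
    (hs : s ∈ Ioc 0 t) : shiftIntegrand ρ a s ≤ t * (deriv ρ (a + t) / (a + t)) := by
  obtain ⟨hs0, hst⟩ := hs
  have has : 0 < a + s := by linarith
  have hf : deriv ρ (a + s) ≤ deriv ρ (a + t) :=
    hE.monotoneOn_deriv hN has (by simp only [mem_Ioi]; linarith) (by linarith)
  have hratio : s / (a + s) ≤ t / (a + t) := by
    rw [div_le_div_iff₀ has (by linarith)]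
    nlinarith
  calc shiftIntegrand ρ a s = deriv ρ (a + s) * (s / (a + s)) := by
        unfold shiftIntegrand; ring
    _ ≤ deriv ρ (a + t) * (t / (a + t)) :=
        mul_le_mul hf hratio (by positivity) (hE.deriv_pos hN (by linarith)).le
    _ = t * (deriv ρ (a + t) / (a + t)) := by ring

lemma intervalIntegrable_shiftIntegrand (hN : IsNFunction ρ) (hE : IsElliptic ρ c₁ c₂)
    (ha : 0 ≤ a) (ht : 0 ≤ t) : IntervalIntegrable (shiftIntegrand ρ a) volume 0 t := by
  refine (intervalIntegrable_const (c := t * (deriv ρ (a + t) / (a + t)))).mono_fun' ?_ ?_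
  · exact ((((measurable_deriv ρ).comp (measurable_const_add a)).div
      (measurable_const_add a)).mul measurable_id).aestronglyMeasurable
  · rw [uIoc_of_le ht]
    filter_upwards [ae_restrict_mem measurableSet_Ioc] with s hs
    rw [Real.norm_of_nonneg (shiftIntegrand_nonneg hN hE ha hs.1.le)]
    exact shiftIntegrand_le hN hE ha hs

lemma shiftN_nonneg (hN : IsNFunction ρ) (hE : IsElliptic ρ c₁ c₂) (ha : 0 ≤ a) (ht : 0 ≤ t) :
    0 ≤ shiftN ρ a t :=
  intervalIntegral.integral_nonneg ht fun _ hs => shiftIntegrand_nonneg hN hE ha hs.1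

lemma shiftN_le_sq_mul_deriv_div (hN : IsNFunction ρ) (hE : IsElliptic ρ c₁ c₂) (ha : 0 ≤ a)
    (ht : 0 ≤ t) : shiftN ρ a t ≤ t ^ 2 * (deriv ρ (a + t) / (a + t)) := by
  have hbound := intervalIntegral.norm_integral_le_of_norm_le_const (a := 0) (b := t)
    (f := shiftIntegrand ρ a) (C := t * (deriv ρ (a + t) / (a + t))) fun s hs => by
      rw [uIoc_of_le ht] at hs
      rw [Real.norm_of_nonneg (shiftIntegrand_nonneg hN hE ha hs.1.le)]
      exact shiftIntegrand_le hN hE ha hs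
  rw [sub_zero, abs_of_nonneg ht] at hbound
  calc shiftN ρ a t ≤ ‖shiftN ρ a t‖ := Real.le_norm_self _
    _ ≤ t * (deriv ρ (a + t) / (a + t)) * t := hbound
    _ = t ^ 2 * (deriv ρ (a + t) / (a + t)) := by ring

lemma sq_mul_deriv_div_le_shiftN (hN : IsNFunction ρ) (hE : IsElliptic ρ c₁ c₂) (hc₂ : 0 ≤ c₂)
    (ha : 0 ≤ a) (ht : 0 < t) :
    t ^ 2 * (deriv ρ (a + t) / (a + t)) ≤ 4 * 2 ^ c₂ * shiftN ρ a t := by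
  set m := deriv ρ (a + t) / (a + t)
  have hK : 0 < (2 : ℝ) ^ c₂ := by positivity
  have hpoint : ∀ s ∈ Icc (t / 2) t, t / 2 * m / 2 ^ c₂ ≤ shiftIntegrand ρ a s := by
    rintro s ⟨hs, hst⟩
    have has : 0 < a + s := by linarith
    have hf : deriv ρ (a + t) ≤ 2 ^ c₂ * deriv ρ (a + s) :=
      hE.deriv_le_two_rpow_mul hN hc₂ has (by linarith) (by linarith)
    have hratio : t / 2 / (a + t) ≤ s / (a + s) :=
      div_le_div₀ (by linarith) hs has (by linarith)
    calc t / 2 * m / 2 ^ c₂ = deriv ρ (a + t) / 2 ^ c₂ * (t / 2 / (a + t)) := by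
          simp only [m]; ring
      _ ≤ deriv ρ (a + s) * (s / (a + s)) :=
          mul_le_mul ((div_le_iff₀' hK).2 hf) hratio (by positivity)
            (hE.deriv_pos hN has).le
      _ = shiftIntegrand ρ a s := by unfold shiftIntegrand; ring
  have hint := intervalIntegrable_shiftIntegrand hN hE ha ht.le
  have hint' : IntervalIntegrable (shiftIntegrand ρ a) volume (t / 2) t :=
    hint.mono_set (uIcc_subset_uIcc (mem_uIcc.2 (Or.inl ⟨by linarith, by linarith⟩))
      right_mem_uIcc)
  have hhalf : t / 2 * (t / 2 * m / 2 ^ c₂) ≤ ∫ s in (t / 2)..t, shiftIntegrand ρ a s := by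
    have := intervalIntegral.integral_mono_on (by linarith) intervalIntegrable_const hint' hpoint
    rwa [intervalIntegral.integral_const, smul_eq_mul, show t - t / 2 = t / 2 by ring] at this
  have hsub : ∫ s in (t / 2)..t, shiftIntegrand ρ a s ≤ shiftN ρ a t :=
    intervalIntegral.integral_mono_interval (by linarith) (by linarith) le_rfl
      (ae_restrict_of_forall_mem measurableSet_Ioc fun s hs =>
        shiftIntegrand_nonneg hN hE ha hs.1.le) hint
  calc t ^ 2 * m = 4 * 2 ^ c₂ * (t / 2 * (t / 2 * m / 2 ^ c₂)) := by field_simp; ring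
    _ ≤ 4 * 2 ^ c₂ * shiftN ρ a t := by gcongr; exact hhalf.trans hsub

lemma deriv_deriv_mul_sq_le_shiftN (hN : IsNFunction ρ) (hE : IsElliptic ρ c₁ c₂) (hc₂ : 0 ≤ c₂)
    (ht : 0 < t) (hta : t ≤ a) :
    deriv (deriv ρ) a * t ^ 2 ≤ 8 * 2 ^ c₂ * c₂ * shiftN ρ a t := by
  have ha : 0 < a := ht.trans_le hta
  have hf : deriv ρ a ≤ deriv ρ (a + t) :=
    hE.monotoneOn_deriv hN ha (by simp only [mem_Ioi]; linarith) (by linarith)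
  have hρ'' : deriv (deriv ρ) a ≤ c₂ * (deriv ρ a / a) := by
    rw [mul_div_assoc', le_div_iff₀ ha, mul_comm]
    exact (hE.2.2 a ha).2
  have hdiv : deriv ρ a / (2 * a) ≤ deriv ρ (a + t) / (a + t) :=
    div_le_div₀ (hE.deriv_pos hN (by linarith)).le hf (by linarith) (by linarith)
  calc deriv (deriv ρ) a * t ^ 2 ≤ c₂ * (deriv ρ a / a) * t ^ 2 := by gcongr
    _ = 2 * c₂ * (t ^ 2 * (deriv ρ a / (2 * a))) := by field_simp
    _ ≤ 2 * c₂ * (t ^ 2 * (deriv ρ (a + t) / (a + t))) := by gcongr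
    _ ≤ 2 * c₂ * (4 * 2 ^ c₂ * shiftN ρ a t) :=
        mul_le_mul_of_nonneg_left (sq_mul_deriv_div_le_shiftN hN hE hc₂ ha.le ht) (by positivity)
    _ = 8 * 2 ^ c₂ * c₂ * shiftN ρ a t := by ring

lemma shiftN_le_deriv_deriv_mul_sq (hN : IsNFunction ρ) (hE : IsElliptic ρ c₁ c₂) (hc₁ : 0 < c₁)
    (hc₂ : 0 ≤ c₂) (ht : 0 < t) (hta : t ≤ a) :
    shiftN ρ a t ≤ 2 ^ c₂ / c₁ * (deriv (deriv ρ) a * t ^ 2) := by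
  have ha : 0 < a := ht.trans_le hta
  have hf : deriv ρ (a + t) ≤ 2 ^ c₂ * deriv ρ a :=
    hE.deriv_le_two_rpow_mul hN hc₂ ha (by linarith) (by linarith)
  have hdiv : deriv ρ (a + t) / (a + t) ≤ 2 ^ c₂ * (deriv ρ a / a) := by
    rw [mul_div_assoc']
    exact div_le_div₀ (by positivity [hE.deriv_pos hN ha]) hf ha (by linarith)
  have hρ'' : deriv ρ a / a ≤ deriv (deriv ρ) a / c₁ := by
    rw [div_le_div_iff₀ ha hc₁, mul_comm, mul_comm _ a]
    exact (hE.2.2 a ha).1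
  calc shiftN ρ a t ≤ t ^ 2 * (deriv ρ (a + t) / (a + t)) :=
        shiftN_le_sq_mul_deriv_div hN hE ha.le ht.le
    _ ≤ t ^ 2 * (2 ^ c₂ * (deriv (deriv ρ) a / c₁)) := by gcongr; exact hdiv.trans (by gcongr)
    _ = 2 ^ c₂ / c₁ * (deriv (deriv ρ) a * t ^ 2) := by ring

lemma le_mul_shiftN_of_le (hN : IsNFunction ρ) (hE : IsElliptic ρ c₁ c₂) (hc₂ : 0 ≤ c₂)
    (ha : 0 ≤ a) (ht : 0 < t) (hat : a ≤ t) : ρ t ≤ 8 * 2 ^ c₂ * shiftN ρ a t := by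
  have hf : deriv ρ t ≤ deriv ρ (a + t) :=
    hE.monotoneOn_deriv hN ht (by simp only [mem_Ioi]; linarith) (by linarith)
  have hpos := hE.deriv_pos hN (by linarith : 0 < a + t)
  calc ρ t ≤ t * deriv ρ t := hN.le_mul_deriv (hE.differentiableAt ht) ht
    _ ≤ t * deriv ρ (a + t) := by gcongr
    _ ≤ 2 * (t ^ 2 * (deriv ρ (a + t) / (a + t))) := by
        rw [mul_div_assoc', ← mul_div_assoc, le_div_iff₀ (by linarith)]
        nlinarith [mul_nonneg (mul_nonneg ht.le hpos.le) (sub_nonneg.2 hat)]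
    _ ≤ 2 * (4 * 2 ^ c₂ * shiftN ρ a t) :=
        mul_le_mul_of_nonneg_left (sq_mul_deriv_div_le_shiftN hN hE hc₂ ha ht) zero_le_two
    _ = 8 * 2 ^ c₂ * shiftN ρ a t := by ring

lemma shiftN_le_mul_of_le (hN : IsNFunction ρ) (hE : IsElliptic ρ c₁ c₂) (hc₂ : 0 ≤ c₂)
    (ha : 0 ≤ a) (ht : 0 < t) (hat : a ≤ t) : shiftN ρ a t ≤ 2 * (2 ^ c₂) ^ 2 * ρ t := by
  have ht2 : 0 < t / 2 := by linarith
  have hf₁ : deriv ρ (a + t) ≤ 2 ^ c₂ * deriv ρ t :=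
    hE.deriv_le_two_rpow_mul hN hc₂ ht (by linarith) (by linarith)
  have hf₂ : deriv ρ t ≤ 2 ^ c₂ * deriv ρ (t / 2) :=
    hE.deriv_le_two_rpow_mul hN hc₂ ht2 (by linarith) (by linarith)
  have hhalf : t / 2 * deriv ρ (t / 2) ≤ ρ t := by
    simpa [show t - t / 2 = t / 2 by ring] using
      hN.sub_mul_deriv_le (hE.differentiableAt ht2) ht2 (by linarith : t / 2 < t)
  have hpos := hE.deriv_pos hN (by linarith : 0 < a + t)
  calc shiftN ρ a t ≤ t ^ 2 * (deriv ρ (a + t) / (a + t)) :=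
        shiftN_le_sq_mul_deriv_div hN hE ha ht.le
    _ ≤ t * deriv ρ (a + t) := by
        rw [mul_div_assoc', div_le_iff₀ (by linarith)]
        nlinarith [mul_nonneg (mul_nonneg ht.le hpos.le) ha]
    _ ≤ t * (2 ^ c₂ * (2 ^ c₂ * deriv ρ (t / 2))) := by gcongr; exact hf₁.trans (by gcongr)
    _ = 2 * (2 ^ c₂) ^ 2 * (t / 2 * deriv ρ (t / 2)) := by ring
    _ ≤ 2 * (2 ^ c₂) ^ 2 * ρ t := by gcongr

/-- Lemma on shifted N-functions. For an elliptic N-function `ρ`,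
uniformly in `a, t ≥ 0`: `ρ_a(t) ∼ ρ''(a)·t²` if `t ≤ a` and `ρ_a(t) ∼ ρ(t)` if
`t ≥ a`, with constants depending only on the characteristics of `ρ`. -/
theorem statement4 (ρ : ℝ → ℝ) (c₁ c₂ : ℝ) (hc₁ : 0 < c₁) (hc₂ : 0 < c₂)
    (hN : IsNFunction ρ) (hE : IsElliptic ρ c₁ c₂) :
    ∃ C > 0, ∀ a ≥ (0:ℝ), ∀ t ≥ (0:ℝ),
      (t ≤ a → deriv (deriv ρ) a * t ^ 2 ≤ C * shiftN ρ a t ∧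
        shiftN ρ a t ≤ C * (deriv (deriv ρ) a * t ^ 2)) ∧
      (a ≤ t → ρ t ≤ C * shiftN ρ a t ∧ shiftN ρ a t ≤ C * ρ t) := by
  set K := (2 : ℝ) ^ c₂
  have hK : 0 < K := by positivity
  have h₁ : 0 ≤ 8 * K * c₂ := by positivity
  have h₂ : 0 ≤ K / c₁ := by positivity
  have h₃ : 0 ≤ 8 * K := by positivity
  have h₄ : 0 ≤ 2 * K ^ 2 := by positivity
  refine ⟨8 * K * c₂ + K / c₁ + 8 * K + 2 * K ^ 2, by positivity, fun a ha t ht => ?_⟩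
  rcases ht.eq_or_lt with rfl | ht
  · simp [shiftN, hN.1]
  have hS := shiftN_nonneg hN hE ha ht.le
  refine ⟨fun hta => ⟨?_, ?_⟩, fun hat => ⟨?_, ?_⟩⟩
  · exact le_mul_of_le_mul_of_nonneg_right
      (deriv_deriv_mul_sq_le_shiftN hN hE hc₂.le ht hta) (by linarith) hS
  · exact le_mul_of_le_mul_of_nonneg_right (shiftN_le_deriv_deriv_mul_sq hN hE hc₁ hc₂.le ht hta)
      (by linarith) (by positivity [hE.deriv_deriv_pos hN hc₁ (ht.trans_le hta)])
  · exact le_mul_of_le_mul_of_nonneg_right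
      (le_mul_shiftN_of_le hN hE hc₂.le ha ht hat) (by linarith) hS
  · exact le_mul_of_le_mul_of_nonneg_right
      (shiftN_le_mul_of_le hN hE hc₂.le ha ht hat) (by linarith) (hN.nonneg ht.le)
end

section
/- Let ρ be an elliptic N-function and for a ≥ 0 let ρ_a(t) := ∫₀ᵗ (ρ'(a+τ)/(a+τ))·τ dτ. Then uniformly in a, b, t ≥ 0, the twice-shifted function satisfies (ρ_a)_b(t) ∼ ρ_{a+b}(t), with implicit constants depending only on the characteristics of ρ. -/
open Set Filter

section ShiftComposition

open MeasureTheory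

variable {ρ : ℝ → ℝ}

lemma continuousOn_deriv_Ioi (hρ : ContDiffOn ℝ 1 ρ (Ici 0)) :
    ContinuousOn (deriv ρ) (Ioi 0) :=
  (hρ.mono Ioi_subset_Ici_self).continuousOn_deriv_of_isOpen isOpen_Ioi le_rfl

/-- `deriv ρ` need not exist at `0`, so the bound comes from the one-sided derivative,
which is continuous on the compact interval `[0, R]`. -/
lemma exists_bound_deriv_Ioc (hρ : ContDiffOn ℝ 1 ρ (Ici 0)) (R : ℝ) :
    ∃ M, ∀ x ∈ Ioc 0 R, ‖deriv ρ x‖ ≤ M := by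
  obtain ⟨M, hM⟩ := isCompact_Icc.exists_bound_of_continuousOn
    ((hρ.continuousOn_derivWithin (uniqueDiffOn_Ici 0) le_rfl).mono
      (Icc_subset_Ici_self : Icc 0 R ⊆ Ici 0))
  refine ⟨M, fun x hx => ?_⟩
  rw [← derivWithin_of_mem_nhds (Ici_mem_nhds hx.1)]
  exact hM x (Ioc_subset_Icc_self hx)

lemma norm_shiftN_integrand_le {a τ : ℝ} (ha : 0 ≤ a) (hτ : 0 < τ) :
    ‖deriv ρ (a + τ) / (a + τ) * τ‖ ≤ ‖deriv ρ (a + τ)‖ := by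
  have haτ : 0 < a + τ := by linarith
  rw [div_mul_eq_mul_div, norm_div, norm_mul, Real.norm_of_nonneg hτ.le,
    Real.norm_of_nonneg haτ.le, div_le_iff₀ haτ]
  exact mul_le_mul_of_nonneg_left (by linarith) (norm_nonneg _)

lemma continuousOn_shiftN_integrand (hρ : ContDiffOn ℝ 1 ρ (Ici 0)) {a : ℝ} (ha : 0 ≤ a) :
    ContinuousOn (fun τ => deriv ρ (a + τ) / (a + τ) * τ) (Ioi 0) := by
  have hmaps : MapsTo (a + ·) (Ioi (0 : ℝ)) (Ioi 0) := fun τ (hτ : 0 < τ) =>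
    show 0 < a + τ by linarith
  exact (((continuousOn_deriv_Ioi hρ).comp (by fun_prop) hmaps).div (by fun_prop)
    fun τ hτ => (hmaps hτ).ne').mul continuousOn_id

lemma intervalIntegrable_shiftN_integrand (hρ : ContDiffOn ℝ 1 ρ (Ici 0)) {a s : ℝ}
    (ha : 0 ≤ a) (hs : 0 ≤ s) :
    IntervalIntegrable (fun τ => deriv ρ (a + τ) / (a + τ) * τ) volume 0 s := by
  obtain ⟨M, hM⟩ := exists_bound_deriv_Ioc hρ (a + s)
  rw [intervalIntegrable_iff_integrableOn_Ioc_of_le hs]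
  refine Integrable.mono' (g := fun _ => M) (integrableOn_const measure_Ioc_lt_top.ne)
    (((continuousOn_shiftN_integrand hρ ha).mono Ioc_subset_Ioi_self).aestronglyMeasurable
      measurableSet_Ioc) ?_
  rw [ae_restrict_iff' measurableSet_Ioc]
  filter_upwards with τ ⟨hτ, hτs⟩
  exact (norm_shiftN_integrand_le ha hτ).trans
    (hM (a + τ) ⟨by linarith, by linarith⟩)

lemma hasDerivAt_shiftN (hρ : ContDiffOn ℝ 1 ρ (Ici 0)) {a s : ℝ} (ha : 0 ≤ a) (hs : 0 < s) :
    HasDerivAt (shiftN ρ a) (deriv ρ (a + s) / (a + s) * s) s :=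
  intervalIntegral.integral_hasDerivAt_right (intervalIntegrable_shiftN_integrand hρ ha hs.le)
    ((continuousOn_shiftN_integrand hρ ha).stronglyMeasurableAtFilter isOpen_Ioi s hs)
    ((continuousOn_shiftN_integrand hρ ha).continuousAt (isOpen_Ioi.mem_nhds hs))

/-- Since `(ρ_a)'(s) / s = ρ'(a + s) / (a + s)`, shifting `ρ_a` by `b` integrates
`ρ'(a + b + τ) / (a + b + τ) · τ`. -/
theorem shiftN_shiftN (hρ : ContDiffOn ℝ 1 ρ (Ici 0)) {a b t : ℝ} (ha : 0 ≤ a) (hb : 0 ≤ b)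
    (ht : 0 ≤ t) : shiftN (shiftN ρ a) b t = shiftN ρ (a + b) t := by
  refine intervalIntegral.integral_congr fun τ hτ => ?_
  rw [uIcc_of_le ht] at hτ
  rcases hτ.1.eq_or_lt with rfl | hτ0
  · simp
  · have hbτ : 0 < b + τ := by linarith
    simp only [(hasDerivAt_shiftN hρ ha hbτ).deriv, mul_div_cancel_right₀ _ hbτ.ne',
      add_assoc]

end ShiftComposition

theorem statement5_general (ρ : ℝ → ℝ) (c₁ c₂ : ℝ)
    (hE : IsElliptic ρ c₁ c₂) :
    ∃ C > 0, ∀ a ≥ (0:ℝ), ∀ b ≥ (0:ℝ), ∀ t ≥ (0:ℝ),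
      shiftN (shiftN ρ a) b t ≤ C * shiftN ρ (a + b) t ∧
      shiftN ρ (a + b) t ≤ C * shiftN (shiftN ρ a) b t := by
  refine ⟨1, one_pos, fun a ha b hb t ht => ?_⟩
  rw [shiftN_shiftN hE.1 ha hb ht, one_mul]
  exact ⟨le_rfl, le_rfl⟩

/-- iterated shift. For an elliptic N-function `ρ`, uniformly in
`a, b, t ≥ 0` the twice-shifted function satisfies `(ρ_a)_b(t) ∼ ρ_{a+b}(t)`,
with constants depending only on the characteristics of `ρ`. -/
theorem statement5 (ρ : ℝ → ℝ) (c₁ c₂ : ℝ) (hc₁ : 0 < c₁) (hc₂ : 0 < c₂)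
    (hN : IsNFunction ρ) (hE : IsElliptic ρ c₁ c₂) :
    ∃ C > 0, ∀ a ≥ (0:ℝ), ∀ b ≥ (0:ℝ), ∀ t ≥ (0:ℝ),
      shiftN (shiftN ρ a) b t ≤ C * shiftN ρ (a + b) t ∧
      shiftN ρ (a + b) t ≤ C * shiftN (shiftN ρ a) b t :=
  statement5_general ρ c₁ c₂ hE
end
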